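/- Let H be a complex Hilbert space with inner product ⟪·,·⟫ conjugate-linear in the first argument. Let R be a pseudo-resolvent on the nonreal points of ℂ (R z : H → H bounded, R z - R w = (z - w) • (R z ∘ R w) for all nonreal z, w) such that the Hilbert adjoint of R z equals R (conj z) for every nonreal z. Fix a nonreal w₀ and ψ₀ ∈ H, set ψ(z) := ψ₀ + (z - w₀) • (R z ψ₀) for nonreal z, and assume the topological closure of the ℂ-linear span of {ψ(z) : z nonreal} equals H. Then there exists a map J : H → H that is additive, conjugate-homogeneous (J(c • x) = conj(c) • (J x)), norm-preserving, an involution (J (J x) = x for all x ∈ H), satisfies J (ψ(z)) = ψ(conj z) for every nonreal z, and commutes with the pseudo-resolvent in the sense that J (R w x) = R (conj w) (J x) for every nonreal w and every x ∈ H. -/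

import Mathlib

/-!
The identity `(z - w) • R w (ψ z) = ψ z - ψ w` together with `(R z)† = R (conj z)` gives the kernel
symmetry `⟪ψ (conj a), ψ (conj b)⟫ = ⟪ψ b, ψ a⟫`. Hence `∑ cᵢ ψ zᵢ ↦ ∑ conj cᵢ ψ (conj zᵢ)` is a
well-defined antilinear isometry on the span of the total family, and it extends to an antiunitary
`J` on `H`. The same identity gives `J (R w (ψ a)) = R (conj w) (ψ (conj a))` for `a ≠ w`; the
diagonal case `a = w` is checked weakly against every `ψ u`, which needs no continuity of
`z ↦ R z`. Density of the span then gives `J ∘ J = id` and `J ∘ R w = R (conj w) ∘ J`.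
-/

open scoped InnerProductSpace ComplexConjugate

section Antiunitary

open Finsupp

variable {ι H : Type*} [NormedAddCommGroup H] [InnerProductSpace ℂ H]

noncomputable def conjLinearCombination (w : ι → H) : (ι →₀ ℂ) →ₗ⋆[ℂ] H :=
  linearCombination ℂ w ∘ₛₗ mapRange.linearMap (starLinearEquiv ℂ : ℂ ≃ₗ⋆[ℂ] ℂ).toLinearMap

@[simp]
theorem conjLinearCombination_single (w : ι → H) (i : ι) (a : ℂ) :
    conjLinearCombination w (single i a) = conj a • w i := by
  simp [conjLinearCombination]

theorem inner_conjLinearCombination {v w : ι → H} (hvw : ∀ i j, ⟪w i, w j⟫_ℂ = ⟪v j, v i⟫_ℂ)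
    (f g : ι →₀ ℂ) :
    ⟪conjLinearCombination w f, conjLinearCombination w g⟫_ℂ =
      ⟪linearCombination ℂ v g, linearCombination ℂ v f⟫_ℂ := by
  induction f using Finsupp.induction_linear with
  | zero => simp
  | add f₁ f₂ h₁ h₂ => simp only [map_add, inner_add_left, inner_add_right, h₁, h₂]
  | single i a =>
    induction g using Finsupp.induction_linear with
    | zero => simp
    | add g₁ g₂ h₁ h₂ => simp only [map_add, inner_add_left, inner_add_right, h₁, h₂]
    | single j b =>
      simp only [conjLinearCombination_single, linearCombination_single, inner_smul_left,
        inner_smul_right, Complex.conj_conj, hvw]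
      ring

theorem ext_inner_left_of_total {v : ι → H}
    (hv : (Submodule.span ℂ (Set.range v)).topologicalClosure = ⊤) {x y : H}
    (h : ∀ i, ⟪x, v i⟫_ℂ = ⟪y, v i⟫_ℂ) : x = y := by
  have hzero : innerSL ℂ (x - y) = 0 :=
    ContinuousLinearMap.ext_on (Submodule.dense_iff_topologicalClosure_eq_top.2 hv)
      (by rintro _ ⟨i, rfl⟩; simp [h])
  rw [← sub_eq_zero, ← inner_self_eq_zero (𝕜 := ℂ)]
  simpa only [innerSL_apply_apply, _root_.zero_apply] using congrArg (· (x - y)) hzero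

theorem exists_antiunitary_of_inner_swap [CompleteSpace H] {v w : ι → H}
    (hv : (Submodule.span ℂ (Set.range v)).topologicalClosure = ⊤)
    (hvw : ∀ i j, ⟪w i, w j⟫_ℂ = ⟪v j, v i⟫_ℂ) :
    ∃ J : H →SL[starRingEnd ℂ] H, (∀ i, J (v i) = w i) ∧ ∀ x y, ⟪J x, J y⟫_ℂ = ⟪y, x⟫_ℂ := by
  have hdense : DenseRange (linearCombination ℂ v) := by
    rw [DenseRange, ← LinearMap.coe_range, range_linearCombination]
    exact Submodule.dense_iff_topologicalClosure_eq_top.2 hv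
  have hnorm : ∀ f, ‖conjLinearCombination w f‖ ≤ 1 * ‖linearCombination ℂ v f‖ := fun f => by
    rw [one_mul, ← sq_le_sq₀ (norm_nonneg _) (norm_nonneg _), ← inner_self_eq_norm_sq (𝕜 := ℂ),
      ← inner_self_eq_norm_sq (𝕜 := ℂ), inner_conjLinearCombination hvw]
  set J := (conjLinearCombination w).extendOfNorm (linearCombination ℂ v)
  have hJ : ∀ f, J (linearCombination ℂ v f) = conjLinearCombination w f :=
    LinearMap.extendOfNorm_eq hdense ⟨1, hnorm⟩
  refine ⟨J, fun i => ?_, hdense.induction_on₂ ?_ fun f g => ?_⟩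
  · simpa using hJ (single i 1)
  · exact isClosed_eq (by fun_prop) (by fun_prop)
  · rw [hJ, hJ, inner_conjLinearCombination hvw]

end Antiunitary

section PseudoResolvent

variable {H : Type*} [NormedAddCommGroup H] [InnerProductSpace ℂ H]

def IsPseudoResolvent (R : ℂ → H →L[ℂ] H) : Prop :=
  ∀ z w : ℂ, z.im ≠ 0 → w.im ≠ 0 → R z - R w = (z - w) • (R z ∘L R w)

variable {R : ℂ → H →L[ℂ] H} {w₀ : ℂ} {ψ₀ : H} {ψ : ℂ → H}

theorem resolvent_apply_defect
    (hres : IsPseudoResolvent R)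
    (hψ : ∀ z : ℂ, z.im ≠ 0 → ψ z = ψ₀ + (z - w₀) • (R z ψ₀))
    {z w : ℂ} (hz : z.im ≠ 0) (hw : w.im ≠ 0) (hzw : z ≠ w) :
    R w (ψ z) = (z - w)⁻¹ • (ψ z - ψ w) := by
  have hRR : (z - w) • R w (R z ψ₀) = R z ψ₀ - R w ψ₀ := by
    have := congrArg (· ψ₀) (hres w z hw hz)
    simp only [_root_.sub_apply, _root_.smul_apply, ContinuousLinearMap.comp_apply] at this
    rw [← neg_sub w z, neg_smul, ← this, neg_sub]
  rw [eq_inv_smul_iff₀ (sub_ne_zero.2 hzw), hψ z hz, hψ w hw, map_add, map_smul, smul_add,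
    smul_comm, hRR]
  module

theorem inner_resolvent_eq [CompleteSpace H]
    (hadj : ∀ z : ℂ, z.im ≠ 0 → ContinuousLinearMap.adjoint (R z) = R (conj z))
    {z : ℂ} (hz : z.im ≠ 0) (x y : H) :
    ⟪R (conj z) x, y⟫_ℂ = ⟪x, R z y⟫_ℂ := by
  rw [← hadj z hz, ContinuousLinearMap.adjoint_inner_left]

theorem inner_defect_eq [CompleteSpace H]
    (hres : IsPseudoResolvent R)
    (hadj : ∀ z : ℂ, z.im ≠ 0 → ContinuousLinearMap.adjoint (R z) = R (conj z))
    (hψ : ∀ z : ℂ, z.im ≠ 0 → ψ z = ψ₀ + (z - w₀) • (R z ψ₀))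
    {a b : ℂ} (ha : a.im ≠ 0) (hb : b.im ≠ 0) (hab : a ≠ conj b) :
    ⟪ψ a, ψ b⟫_ℂ = ⟪ψ a, ψ₀⟫_ℂ +
      (b - w₀) * ((conj a - b)⁻¹ * (⟪ψ a, ψ₀⟫_ℂ - ⟪ψ (conj b), ψ₀⟫_ℂ)) := by
  have hb' : (conj b).im ≠ 0 := by simpa using hb
  conv_lhs => rw [hψ b hb]
  rw [inner_add_right, inner_smul_right, ← inner_resolvent_eq hadj hb,
    resolvent_apply_defect hres hψ ha hb' hab, inner_smul_left, inner_sub_left, map_inv₀,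
    map_sub, Complex.conj_conj]

theorem inner_defect_conj [CompleteSpace H]
    (hres : IsPseudoResolvent R)
    (hadj : ∀ z : ℂ, z.im ≠ 0 → ContinuousLinearMap.adjoint (R z) = R (conj z))
    (hψ : ∀ z : ℂ, z.im ≠ 0 → ψ z = ψ₀ + (z - w₀) • (R z ψ₀))
    {a b : ℂ} (ha : a.im ≠ 0) (hb : b.im ≠ 0) :
    ⟪ψ (conj a), ψ (conj b)⟫_ℂ = ⟪ψ b, ψ a⟫_ℂ := by
  obtain rfl | hba := eq_or_ne b (conj a)
  · rw [Complex.conj_conj]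
  have hab : conj b ≠ a := fun h => hba (by simp [← h])
  rw [inner_defect_eq hres hadj hψ (by simpa using ha) (by simpa using hb)
      (fun h => hba (by simp [h])),
    inner_defect_eq hres hadj hψ hb ha hba, Complex.conj_conj, Complex.conj_conj]
  field_simp
  ring

theorem inner_defect_resolvent_defect_symm [CompleteSpace H]
    (hres : IsPseudoResolvent R)
    (hadj : ∀ z : ℂ, z.im ≠ 0 → ContinuousLinearMap.adjoint (R z) = R (conj z))
    (hψ : ∀ z : ℂ, z.im ≠ 0 → ψ z = ψ₀ + (z - w₀) • (R z ψ₀))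
    {u w : ℂ} (hu : u.im ≠ 0) (hw : w.im ≠ 0) :
    ⟪ψ (conj u), R w (ψ w)⟫_ℂ = ⟪ψ (conj w), R w (ψ u)⟫_ℂ := by
  obtain rfl | huw := eq_or_ne u w
  · rfl
  have hu' : (conj u).im ≠ 0 := by simpa using hu
  have hw' : (conj w).im ≠ 0 := by simpa using hw
  rw [← inner_resolvent_eq hadj hw,
    resolvent_apply_defect hres hψ hu' hw' ((RingHom.injective _).ne huw),
    resolvent_apply_defect hres hψ hu hw huw, inner_smul_left, inner_smul_right, inner_sub_left,
    inner_sub_right, map_inv₀, map_sub, Complex.conj_conj, Complex.conj_conj,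
    ← inner_defect_conj hres hadj hψ hu hw', Complex.conj_conj]

theorem antiunitary_apply_resolvent_defect [CompleteSpace H]
    (hres : IsPseudoResolvent R)
    (hadj : ∀ z : ℂ, z.im ≠ 0 → ContinuousLinearMap.adjoint (R z) = R (conj z))
    (hψ : ∀ z : ℂ, z.im ≠ 0 → ψ z = ψ₀ + (z - w₀) • (R z ψ₀))
    (htotal :
      (Submodule.span ℂ (Set.range fun z : {z : ℂ // z.im ≠ 0} => ψ z)).topologicalClosure = ⊤)
    {J : H →SL[starRingEnd ℂ] H} (hJψ : ∀ z : ℂ, z.im ≠ 0 → J (ψ z) = ψ (conj z))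
    (hJ : ∀ x y, ⟪J x, J y⟫_ℂ = ⟪y, x⟫_ℂ) {a w : ℂ} (ha : a.im ≠ 0) (hw : w.im ≠ 0) :
    J (R w (ψ a)) = R (conj w) (ψ (conj a)) := by
  have hw' : (conj w).im ≠ 0 := by simpa using hw
  obtain rfl | haw := eq_or_ne a w
  · refine ext_inner_left_of_total htotal fun ⟨u, hu⟩ => ?_
    have hu' : (conj u).im ≠ 0 := by simpa using hu
    calc ⟪J (R a (ψ a)), ψ u⟫_ℂ = ⟪ψ (conj u), R a (ψ a)⟫_ℂ := by
          rw [← Complex.conj_conj u, ← hJψ _ hu', hJ, Complex.conj_conj]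
      _ = ⟪R (conj a) (ψ (conj a)), ψ u⟫_ℂ := by
          rw [inner_defect_resolvent_defect_symm hres hadj hψ hu ha, inner_resolvent_eq hadj ha]
  · rw [resolvent_apply_defect hres hψ ha hw haw,
      resolvent_apply_defect hres hψ (by simpa using ha) hw' ((RingHom.injective _).ne haw),
      ContinuousLinearMap.map_smulₛₗ, map_sub, hJψ a ha, hJψ w hw, map_inv₀, map_sub]

end PseudoResolvent

theorem stmt8_general {H : Type*} [NormedAddCommGroup H] [InnerProductSpace ℂ H] [CompleteSpace H]
    (R : ℂ → H →L[ℂ] H)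
    (hres : ∀ z w : ℂ, z.im ≠ 0 → w.im ≠ 0 → R z - R w = (z - w) • (R z ∘L R w))
    (hadj : ∀ z : ℂ, z.im ≠ 0 → ContinuousLinearMap.adjoint (R z) = R (conj z))
    (w₀ : ℂ) (ψ₀ : H)
    (ψ : ℂ → H) (hψ : ∀ z : ℂ, z.im ≠ 0 → ψ z = ψ₀ + (z - w₀) • (R z ψ₀))
    (htotal : (Submodule.span ℂ {x : H | ∃ z : ℂ, z.im ≠ 0 ∧ x = ψ z}).topologicalClosure = ⊤) :
    ∃ J : H → H,
      (∀ x y : H, J (x + y) = J x + J y) ∧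
      (∀ (c : ℂ) (x : H), J (c • x) = conj c • J x) ∧
      (∀ x : H, ‖J x‖ = ‖x‖) ∧
      (∀ x : H, J (J x) = x) ∧
      (∀ z : ℂ, z.im ≠ 0 → J (ψ z) = ψ (conj z)) ∧
      (∀ w : ℂ, w.im ≠ 0 → ∀ x : H, J (R w x) = R (conj w) (J x)) := by
  have hrange : Set.range (fun z : {z : ℂ // z.im ≠ 0} => ψ z) =
      {x : H | ∃ z : ℂ, z.im ≠ 0 ∧ x = ψ z} := by
    ext x
    simp [eq_comm]
  rw [← hrange] at htotal
  have hdense := Submodule.dense_iff_topologicalClosure_eq_top.2 htotal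
  obtain ⟨J, hJψ, hJ⟩ := exists_antiunitary_of_inner_swap htotal
    (w := fun z => ψ (conj z.1)) fun i j => inner_defect_conj hres hadj hψ i.2 j.2
  replace hJψ : ∀ z : ℂ, z.im ≠ 0 → J (ψ z) = ψ (conj z) := fun z hz => hJψ ⟨z, hz⟩
  have hJJ : J.comp J = ContinuousLinearMap.id ℂ H := by
    refine ContinuousLinearMap.ext_on hdense ?_
    rintro _ ⟨⟨z, hz⟩, rfl⟩
    simp [hJψ z hz, hJψ _ (by simpa using hz : (conj z).im ≠ 0)]
  have hJR : ∀ w : ℂ, w.im ≠ 0 → J.comp (R w) = (R (conj w)).comp J := fun w hw => by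
    refine ContinuousLinearMap.ext_on hdense ?_
    rintro _ ⟨⟨z, hz⟩, rfl⟩
    simp [antiunitary_apply_resolvent_defect hres hadj hψ htotal hJψ hJ hz hw, hJψ z hz]
  refine ⟨J, map_add J, J.map_smulₛₗ, fun x => ?_, fun x => congr($hJJ x),
    hJψ, fun w hw x => congr($(hJR w hw) x)⟩
  rw [← sq_eq_sq₀ (norm_nonneg _) (norm_nonneg _), ← inner_self_eq_norm_sq (𝕜 := ℂ),
    ← inner_self_eq_norm_sq (𝕜 := ℂ), hJ]

/-- Existence of an antilinear isometric involution `J` with `J ψ(z) = ψ(conj z)`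
commuting with a pseudo-resolvent `R` whose adjoint satisfies `(R z)† = R (conj z)`,
provided the defect family `ψ(z) = ψ₀ + (z - w₀) • R z ψ₀` is total in `H`. -/
theorem stmt8 {H : Type*} [NormedAddCommGroup H] [InnerProductSpace ℂ H] [CompleteSpace H]
    (R : ℂ → H →L[ℂ] H)
    (hres : ∀ z w : ℂ, z.im ≠ 0 → w.im ≠ 0 → R z - R w = (z - w) • (R z ∘L R w))
    (hadj : ∀ z : ℂ, z.im ≠ 0 → ContinuousLinearMap.adjoint (R z) = R (conj z))
    (w₀ : ℂ) (hw₀ : w₀.im ≠ 0) (ψ₀ : H)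
    (ψ : ℂ → H) (hψ : ∀ z : ℂ, z.im ≠ 0 → ψ z = ψ₀ + (z - w₀) • (R z ψ₀))
    (htotal : (Submodule.span ℂ {x : H | ∃ z : ℂ, z.im ≠ 0 ∧ x = ψ z}).topologicalClosure = ⊤) :
    ∃ J : H → H,
      (∀ x y : H, J (x + y) = J x + J y) ∧
      (∀ (c : ℂ) (x : H), J (c • x) = conj c • J x) ∧
      (∀ x : H, ‖J x‖ = ‖x‖) ∧
      (∀ x : H, J (J x) = x) ∧
      (∀ z : ℂ, z.im ≠ 0 → J (ψ z) = ψ (conj z)) ∧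
      (∀ w : ℂ, w.im ≠ 0 → ∀ x : H, J (R w x) = R (conj w) (J x)) :=
  stmt8_general R hres hadj w₀ ψ₀ ψ hψ htotal
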